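/- The Hausdorff mapping H : (compact metric spaces with Gromov–Hausdorff distance) → (compact metric spaces), sending X to its hyperspace of nonempty closed subsets with the Hausdorff metric, is nonexpanding but not a contraction: it is 1-Lipschitz, and for any constant C < 1 there exist compacta X, Y with d_GH(H(X), H(Y)) > C · d_GH(X, Y). -/

import Mathlib

/-! Put `X` and `Y` isometrically into a common space `Z` whose images are at Hausdorff
distance `r = d_GH(X, Y)`. Pushing forward identifies `H(X)` and `H(Y)` with the compacta of
`Z` contained in the two images, and a compactum `K` in one image is within `r` of the
(compact, nonempty) part of the other image lying in the closed `r`-neighbourhood of `K`.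
Hence the two hyperspaces sit in `H(Z)` at Hausdorff distance at most `r`.

For sharpness, `d_GH(pt, Y) ≥ diam Y / 2` and `y ↦ {y}` embeds `Y` isometrically in `H(Y)`,
while `H(pt) = pt`. For `X = {1/2}` and `Y = {0, 1}` in `ℝ` this gives
`d_GH(X, Y) ≤ 1/2 ≤ d_GH(H(X), H(Y))`. -/

open Metric Set TopologicalSpace GromovHausdorff

instance {α : Type*} [TopologicalSpace α] [Nonempty α] :
    Nonempty (NonemptyCompacts α) :=
  ⟨⟨⟨{Classical.arbitrary α}, isCompact_singleton⟩, Set.singleton_nonempty _⟩⟩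

/-- The Hausdorff mapping on the Gromov–Hausdorff space, sending a compact metric space
to its hyperspace of nonempty closed subsets with the Hausdorff metric. -/
noncomputable def HausdorffMap : GHSpace → GHSpace :=
  fun X => toGHSpace (NonemptyCompacts X.Rep)

namespace TopologicalSpace.NonemptyCompacts

variable {α : Type*} [MetricSpace α]

theorem exists_subset_dist_le_dist (s t K : NonemptyCompacts α) (hK : (K : Set α) ⊆ s) :
    ∃ L : NonemptyCompacts α, (L : Set α) ⊆ t ∧ dist K L ≤ dist s t := by
  set r := dist s t
  set L := (t : Set α) ∩ {z | infDist z K ≤ r}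
  have hfin : hausdorffEDist (s : Set α) t ≠ ⊤ :=
    hausdorffEDist_ne_top_of_nonempty_of_bounded s.nonempty t.nonempty
      s.isCompact.isBounded t.isCompact.isBounded
  have nearest : ∀ x ∈ (K : Set α), ∃ y ∈ L, dist x y ≤ r := fun x hx => by
    obtain ⟨y, hy, hinf⟩ := t.isCompact.exists_infDist_eq_dist t.nonempty x
    have hxy : dist x y ≤ r := hinf ▸ infDist_le_hausdorffDist_of_mem (hK hx) hfin
    exact ⟨y, ⟨hy, (infDist_le_dist_of_mem hx).trans (dist_comm x y ▸ hxy)⟩, hxy⟩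
  have hL : IsCompact L := t.isCompact.inter_right <|
    isClosed_le (continuous_infDist_pt _) continuous_const
  obtain ⟨x, hx⟩ := K.nonempty
  refine ⟨⟨⟨L, hL⟩, (nearest x hx).imp fun _ h => h.1⟩, inter_subset_left, ?_⟩
  refine hausdorffDist_le_of_infDist dist_nonneg (fun x hx => ?_) fun z hz => hz.2
  obtain ⟨y, hy, hxy⟩ := nearest x hx
  exact (infDist_le_dist_of_mem hy).trans hxy

theorem hausdorffDist_setOf_subset_le_dist (s t : NonemptyCompacts α) :
    hausdorffDist {K : NonemptyCompacts α | (K : Set α) ⊆ s} {L | (L : Set α) ⊆ t} ≤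
      dist s t := by
  refine hausdorffDist_le_of_mem_dist dist_nonneg (fun K hK => ?_) fun L hL => ?_
  · exact exists_subset_dist_le_dist s t K hK
  · obtain ⟨K, hK, hLK⟩ := exists_subset_dist_le_dist t s L hL
    exact ⟨K, hK, dist_comm t s ▸ hLK⟩

theorem diam_univ_le_diam_univ [CompactSpace α] :
    diam (univ : Set α) ≤ diam (univ : Set (NonemptyCompacts α)) :=
  (isometry_singleton : Isometry ({·} : α → NonemptyCompacts α)).diam_range ▸
    diam_mono (subset_univ _) isBounded_of_compactSpace

end TopologicalSpace.NonemptyCompacts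

theorem Isometry.nonemptyCompactsMap {α β : Type*} [MetricSpace α] [MetricSpace β]
    {f : α → β} (hf : Isometry f) : Isometry (NonemptyCompacts.map f hf.continuous) :=
  Isometry.of_dist_eq fun K L => by
    simp only [NonemptyCompacts.dist_eq, NonemptyCompacts.coe_map, hausdorffDist_image hf]

noncomputable def IsometryEquiv.nonemptyCompactsCongr {α β : Type*} [MetricSpace α]
    [MetricSpace β] (e : α ≃ᵢ β) : NonemptyCompacts α ≃ᵢ NonemptyCompacts β :=
  .mk' (NonemptyCompacts.map e e.continuous) (NonemptyCompacts.map e.symm e.symm.continuous)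
    (fun K => by ext; simp) e.isometry.nonemptyCompactsMap

namespace GromovHausdorff

variable (X Y : Type*) [MetricSpace X] [CompactSpace X] [Nonempty X]
  [MetricSpace Y] [CompactSpace Y] [Nonempty Y]

theorem ghDist_nonemptyCompacts_le :
    ghDist (NonemptyCompacts X) (NonemptyCompacts Y) ≤ ghDist X Y := by
  have hΦ := isometry_optimalGHInjl X Y
  have hΨ := isometry_optimalGHInjr X Y
  let s : NonemptyCompacts (OptimalGHCoupling X Y) :=
    ⟨⟨range (optimalGHInjl X Y), isCompact_range hΦ.continuous⟩, range_nonempty _⟩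
  let t : NonemptyCompacts (OptimalGHCoupling X Y) :=
    ⟨⟨range (optimalGHInjr X Y), isCompact_range hΨ.continuous⟩, range_nonempty _⟩
  calc ghDist (NonemptyCompacts X) (NonemptyCompacts Y)
      ≤ hausdorffDist (range (NonemptyCompacts.map _ hΦ.continuous))
          (range (NonemptyCompacts.map _ hΨ.continuous)) :=
        ghDist_le_hausdorffDist hΦ.nonemptyCompactsMap hΨ.nonemptyCompactsMap
    _ ≤ dist s t := by
        rw [NonemptyCompacts.range_map hΦ.isEmbedding.isInducing,
          NonemptyCompacts.range_map hΨ.isEmbedding.isInducing]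
        exact NonemptyCompacts.hausdorffDist_setOf_subset_le_dist s t
    _ = ghDist X Y := hausdorffDist_optimal

theorem diam_le_two_mul_ghDist [Subsingleton X] : diam (univ : Set Y) ≤ 2 * ghDist X Y := by
  obtain ⟨x⟩ := ‹Nonempty X›
  have hΦ := isometry_optimalGHInjl X Y
  have hΨ := isometry_optimalGHInjr X Y
  have hfin : hausdorffEDist (range (optimalGHInjr X Y)) (range (optimalGHInjl X Y)) ≠ ⊤ :=
    hausdorffEDist_ne_top_of_nonempty_of_bounded (range_nonempty _) (range_nonempty _)
      (isCompact_range hΨ.continuous).isBounded (isCompact_range hΦ.continuous).isBounded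
  have near : ∀ y, dist (optimalGHInjr X Y y) (optimalGHInjl X Y x) ≤ ghDist X Y := fun y => by
    rw [← infDist_singleton, ← (subsingleton_range _).eq_singleton_of_mem (mem_range_self x),
      ← hausdorffDist_optimal, hausdorffDist_comm]
    exact infDist_le_hausdorffDist_of_mem (mem_range_self y) hfin
  refine diam_le_of_forall_dist_le (mul_nonneg zero_le_two dist_nonneg) fun y _ y' _ => ?_
  calc dist y y' = dist (optimalGHInjr X Y y) (optimalGHInjr X Y y') := (hΨ.dist_eq y y').symm
    _ ≤ dist (optimalGHInjr X Y y) (optimalGHInjl X Y x)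
        + dist (optimalGHInjr X Y y') (optimalGHInjl X Y x) := dist_triangle_right _ _ _
    _ ≤ 2 * ghDist X Y := by linarith [near y, near y']

end GromovHausdorff

theorem hausdorffMap_toGHSpace (X : Type*) [MetricSpace X] [CompactSpace X] [Nonempty X] :
    HausdorffMap (toGHSpace X) = toGHSpace (NonemptyCompacts X) := by
  obtain ⟨e⟩ := toGHSpace_eq_toGHSpace_iff_isometryEquiv.1 (GHSpace.toGHSpace_rep (toGHSpace X))
  exact toGHSpace_eq_toGHSpace_iff_isometryEquiv.2 ⟨e.nonemptyCompactsCongr⟩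

theorem ghDist_singleton_half_pair_zero_one_le :
    ghDist ({1 / 2} : Set ℝ) ({0, 1} : Set ℝ) ≤ 1 / 2 := by
  have h := ghDist_le_hausdorffDist (isometry_subtype_coe (s := ({1 / 2} : Set ℝ)))
    (isometry_subtype_coe (s := ({0, 1} : Set ℝ)))
  rw [Subtype.range_coe, Subtype.range_coe] at h
  refine h.trans (hausdorffDist_le_of_mem_dist (by norm_num) ?_ ?_)
  · rintro x rfl
    exact ⟨0, by simp, by norm_num [Real.dist_eq, abs_of_pos]⟩
  · rintro y (rfl | rfl)
    all_goals exact ⟨1 / 2, rfl, by norm_num [Real.dist_eq, abs_of_pos]⟩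

theorem diam_univ_pair_zero_one : diam (univ : Set ({0, 1} : Set ℝ)) = 1 := by
  rw [← isometry_subtype_coe.diam_range, Subtype.range_coe, diam_pair, Real.dist_eq]
  norm_num

theorem stmt_8 :
    LipschitzWith 1 HausdorffMap ∧
      ∀ C : ℝ, C < 1 → ∃ X Y : GHSpace,
        dist (HausdorffMap X) (HausdorffMap Y) > C * dist X Y := by
  refine ⟨LipschitzWith.of_dist_le_mul fun p q => ?_, fun C hC => ?_⟩
  · rw [NNReal.coe_one, one_mul, dist_ghDist p q]
    exact ghDist_nonemptyCompacts_le p.Rep q.Rep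
  refine ⟨toGHSpace ({1 / 2} : Set ℝ), toGHSpace ({0, 1} : Set ℝ), ?_⟩
  rw [hausdorffMap_toGHSpace, hausdorffMap_toGHSpace]
  change C * ghDist _ _ < ghDist _ _
  have hupper := ghDist_singleton_half_pair_zero_one_le
  have hlower : 1 / 2 ≤ ghDist (NonemptyCompacts ({1 / 2} : Set ℝ))
      (NonemptyCompacts ({0, 1} : Set ℝ)) := by
    have hgh := diam_le_two_mul_ghDist (NonemptyCompacts ({1 / 2} : Set ℝ))
      (NonemptyCompacts ({0, 1} : Set ℝ))
    have hdiam := NonemptyCompacts.diam_univ_le_diam_univ (α := ({0, 1} : Set ℝ))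
    rw [diam_univ_pair_zero_one] at hdiam
    linarith
  have h0 : 0 ≤ ghDist ({1 / 2} : Set ℝ) ({0, 1} : Set ℝ) := dist_nonneg
  rcases le_or_gt C 0 with hC0 | hC0 <;> nlinarith
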